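/- Let π : ℤ → ℝ be finitely supported with π_t ≤ 0 for t ≠ 0 and ∑_t π_t ≥ 0. Then for every monotone φ : ℝ → ℝ with φ(0) = 0 and any points y_0, …, y_T ∈ ℝ with u_i = φ(y_i), we have ∑_{i=0}^{T} ∑_{j=0}^{T} u_i π_{i−j} y_j ≥ 0. -/

import Mathlib

/-!
Let `Φ` be the primitive of `φ` vanishing at `0`. Monotonicity of `φ` makes `Φ` convex with
subgradient `φ`, so `u i * y j ≤ (u i * y i - Φ (y i)) + Φ (y j)` with both summands
nonnegative (as `φ 0 = 0`). The Toeplitz matrix `π (i - j)` has nonpositive off-diagonal entries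
and nonnegative row and column sums, so the bilinear form is bounded below by the nonnegative
quantity `∑ i, (u i * y i - Φ (y i)) * ∑ j, π (i - j) + ∑ j, Φ (y j) * ∑ i, π (i - j)`.
-/

open Finset intervalIntegral

theorem monotone_of_forall_sub_mul_sub_nonneg {φ : ℝ → ℝ}
    (h : ∀ x y : ℝ, 0 ≤ (φ x - φ y) * (x - y)) : Monotone φ := by
  intro a b hab
  rcases hab.eq_or_lt with rfl | hlt
  · exact le_rfl
  · nlinarith [h b a]

theorem Monotone.mul_sub_le_intervalIntegral {φ : ℝ → ℝ} (hφ : Monotone φ) (a b : ℝ) :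
    φ a * (b - a) ≤ ∫ s in a..b, φ s := by
  rcases le_total a b with hab | hba
  · calc φ a * (b - a) = ∫ _ in a..b, φ a := by simp [mul_comm]
      _ ≤ ∫ s in a..b, φ s :=
        integral_mono_on hab intervalIntegrable_const hφ.intervalIntegrable
          fun s hs => hφ hs.1
  · have hle : ∫ s in b..a, φ s ≤ ∫ _ in b..a, φ a :=
      integral_mono_on hba hφ.intervalIntegrable intervalIntegrable_const
        fun s hs => hφ hs.2
    rw [integral_symm b a]
    simp only [integral_const, smul_eq_mul] at hle
    linarith

theorem Monotone.mul_sub_le_primitive_sub {φ : ℝ → ℝ} (hφ : Monotone φ) (c a b : ℝ) :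
    φ a * (b - a) ≤ (∫ s in c..b, φ s) - ∫ s in c..a, φ s := by
  rw [integral_interval_sub_left hφ.intervalIntegrable hφ.intervalIntegrable]
  exact hφ.mul_sub_le_intervalIntegral a b

section Hyperdominant

variable {ι : Type*} [Fintype ι]

structure Matrix.IsDoublyHyperdominant (M : Matrix ι ι ℝ) : Prop where
  off_diag_nonpos : ∀ i j, i ≠ j → M i j ≤ 0
  row_sum_nonneg : ∀ i, 0 ≤ ∑ j, M i j
  col_sum_nonneg : ∀ j, 0 ≤ ∑ i, M i j

theorem Matrix.IsDoublyHyperdominant.sum_mul_mul_nonneg {M : Matrix ι ι ℝ}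
    (hM : M.IsDoublyHyperdominant) {u y a b : ι → ℝ} (ha : 0 ≤ a) (hb : 0 ≤ b)
    (hdiag : ∀ i, u i * y i = a i + b i) (hsplit : ∀ i j, u i * y j ≤ a i + b j) :
    0 ≤ ∑ i, ∑ j, u i * M i j * y j := by
  have hterm : ∀ i j, M i j * (a i + b j) ≤ u i * M i j * y j := by
    intro i j
    rcases eq_or_ne i j with rfl | hij
    · exact le_of_eq (by rw [← hdiag]; ring)
    · nlinarith [mul_le_mul_of_nonpos_left (hsplit i j) (hM.off_diag_nonpos i j hij)]
  have hexpand : ∑ i, ∑ j, M i j * (a i + b j) =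
      ∑ i, a i * ∑ j, M i j + ∑ j, b j * ∑ i, M i j := by
    simp only [mul_add, sum_add_distrib, mul_sum]
    rw [sum_comm (f := fun i j => M i j * b j)]
    simp only [mul_comm]
  calc (0 : ℝ) ≤ ∑ i, a i * ∑ j, M i j + ∑ j, b j * ∑ i, M i j :=
        add_nonneg (sum_nonneg fun i _ => mul_nonneg (ha i) (hM.row_sum_nonneg i))
          (sum_nonneg fun j _ => mul_nonneg (hb j) (hM.col_sum_nonneg j))
    _ = ∑ i, ∑ j, M i j * (a i + b j) := hexpand.symm
    _ ≤ ∑ i, ∑ j, u i * M i j * y j := sum_le_sum fun i _ => sum_le_sum fun j _ => hterm i j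

end Hyperdominant

section Toeplitz

variable {π : ℤ → ℝ} (hfin : (Function.support π).Finite)
  (hneg : ∀ t : ℤ, t ≠ 0 → π t ≤ 0) (hsum : 0 ≤ ∑ᶠ t, π t)
include hfin hneg hsum

theorem sum_nonneg_of_zero_mem_of_finsum_nonneg {s : Finset ℤ} (h0 : 0 ∈ s) : 0 ≤ ∑ t ∈ s, π t := by
  classical
  set F := s ∪ hfin.toFinset
  have hrest : ∑ t ∈ F \ s, π t ≤ 0 :=
    sum_nonpos fun t ht => hneg t fun h => (mem_sdiff.1 ht).2 (h ▸ h0)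
  have htotal : ∑ᶠ t, π t = ∑ t ∈ F, π t :=
    finsum_eq_sum_of_support_subset π fun t ht => mem_union_right s (hfin.mem_toFinset.2 ht)
  rw [htotal, ← sum_sdiff subset_union_left] at hsum
  linarith

theorem sum_comp_nonneg_of_injective {κ : Type*} [Fintype κ] {g : κ → ℤ}
    (hg : Function.Injective g) {k₀ : κ} (hk₀ : g k₀ = 0) : 0 ≤ ∑ k, π (g k) := by
  classical
  rw [← sum_image hg.injOn]
  exact sum_nonneg_of_zero_mem_of_finsum_nonneg hfin hneg hsum (mem_image.2 ⟨k₀, mem_univ _, hk₀⟩)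

theorem isDoublyHyperdominant_toeplitz (n : ℕ) :
    Matrix.IsDoublyHyperdominant fun i j : Fin n => π ((i : ℤ) - (j : ℤ)) where
  off_diag_nonpos i j hij := hneg _ (sub_ne_zero.2 (by exact_mod_cast Fin.val_injective.ne hij))
  row_sum_nonneg i := sum_comp_nonneg_of_injective hfin hneg hsum
    (fun j k h => Fin.ext (by simpa using h)) (sub_self (i : ℤ))
  col_sum_nonneg j := sum_comp_nonneg_of_injective hfin hneg hsum
    (fun i k h => Fin.ext (by simpa using h)) (sub_self (j : ℤ))

end Toeplitz

/-- Zames--Falb quadratic inequality for monotone nonlinearities over a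
finite horizon. -/
theorem stmt13 (π : ℤ → ℝ) (hfin : (Function.support π).Finite)
    (hneg : ∀ t : ℤ, t ≠ 0 → π t ≤ 0)
    (hsum : 0 ≤ ∑ᶠ t, π t)
    (φ : ℝ → ℝ)
    (hmono : ∀ x y : ℝ, 0 ≤ (φ x - φ y) * (x - y))
    (hφ0 : φ 0 = 0)
    (T : ℕ) (y : Fin (T + 1) → ℝ) :
    0 ≤ ∑ i : Fin (T + 1), ∑ j : Fin (T + 1),
      φ (y i) * π ((i : ℤ) - (j : ℤ)) * y j := by
  have hφ := monotone_of_forall_sub_mul_sub_nonneg hmono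
  set Φ : ℝ → ℝ := fun x => ∫ s in (0 : ℝ)..x, φ s
  have hsub (a b : ℝ) : φ a * (b - a) ≤ Φ b - Φ a := hφ.mul_sub_le_primitive_sub 0 a b
  have hΦ0 : Φ 0 = 0 := integral_same
  refine (isDoublyHyperdominant_toeplitz hfin hneg hsum (T + 1)).sum_mul_mul_nonneg
    (a := fun i => φ (y i) * y i - Φ (y i)) (b := fun j => Φ (y j))
    (fun i => show 0 ≤ _ - _ from ?_) (fun j => show 0 ≤ Φ _ from ?_) (fun i => by ring)
    (fun i j => ?_)
  · linarith [hsub (y i) 0]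
  · have := hsub 0 (y j)
    rwa [hφ0, zero_mul, hΦ0, sub_zero] at this
  · linarith [hsub (y i) (y j)]
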